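/- arXiv:2404.01608 — 2 statements merged into one kernel-verified Lean document; each statement's English description precedes it below -/
import Mathlib

section
/- Assume conditional-mean realizability. Then for every P ∈ Ξ(ρ,σ²), every FAIRM solution (w^F, Φ^F), every CMI solution (w^C, Φ^C), and every e ∈ E: E[y^e | σ(w^F(Φ^F(x^e)))] = w^F(Φ^F(x^e)) P^e-a.s. and E[y^e | σ(w^C(Φ^C(x^e)))] = w^C(Φ^C(x^e)) P^e-a.s.; that is, FAIRM and CMI have zero multi-calibration bias in every environment. -/
/-! Diversity upgrades the training-invariant representation `Φ` of a FAIRM solution to an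
invariant one, so conditional-mean realizability yields `v` with `v ∘ Φ = E[y | Φ(x)]` in every
environment. By Pythagoras the excess risk of `w ∘ Φ` over `v ∘ Φ` is `E[(w ∘ Φ - v ∘ Φ)²] ≥ 0`;
it is also an expression in the invariant moments `E[u(Φ(x)) y]`, `E[u(Φ(x))²]`, hence the same
in every environment. So it equals its `α`-average over the training environments, which
optimality of `(w, Φ)` against `(v, Φ)` makes `≤ 0`; hence `w ∘ Φ = E[y | Φ(x)]`. For FAIRM and CMI alike, calibration then follows from the tower
property, as `σ(w(Φ(x))) ⊆ σ(Φ(x))`. -/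

open MeasureTheory

noncomputable section

/-- `E[u(Φ(x^e)) * y^e]`, the covariance-type moment in environment `e`. -/
def covT {p q : ℕ} {E : Type} (P : E → Measure ((Fin p → ℝ) × ℝ))
    (Φ : (Fin p → ℝ) → (Fin q → ℝ)) (u : (Fin q → ℝ) → ℝ) (e : E) : ℝ :=
  ∫ z, u (Φ z.1) * z.2 ∂(P e)

/-- `E[(u(Φ(x^e)))²]`, the second-moment term in environment `e`. -/
def sqT {p q : ℕ} {E : Type} (P : E → Measure ((Fin p → ℝ) × ℝ))
    (Φ : (Fin p → ℝ) → (Fin q → ℝ)) (u : (Fin q → ℝ) → ℝ) (e : E) : ℝ :=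
  ∫ z, (u (Φ z.1)) ^ 2 ∂(P e)

/-- The risk `R^e(f) = E[(y^e - f(x^e))²]`. -/
def risk {p : ℕ} {E : Type} (P : E → Measure ((Fin p → ℝ) × ℝ))
    (f : (Fin p → ℝ) → ℝ) (e : E) : ℝ :=
  ∫ z, (z.2 - f z.1) ^ 2 ∂(P e)

/-- The set `I*` of invariant representations. -/
def InvSet {p q : ℕ} {E : Type} (P : E → Measure ((Fin p → ℝ) × ℝ))
    (FΦ : Set ((Fin p → ℝ) → (Fin q → ℝ))) (Fw : Set ((Fin q → ℝ) → ℝ)) :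
    Set ((Fin p → ℝ) → (Fin q → ℝ)) :=
  {Φ | Φ ∈ FΦ ∧ ∀ u ∈ Fw, ∀ e e' : E,
    covT P Φ u e = covT P Φ u e' ∧ sqT P Φ u e = sqT P Φ u e'}

/-- The training-feasible set `I_tr`. -/
def TrFeas {p q : ℕ} {E : Type} (P : E → Measure ((Fin p → ℝ) × ℝ)) (Etr : Finset E)
    (FΦ : Set ((Fin p → ℝ) → (Fin q → ℝ))) (Fw : Set ((Fin q → ℝ) → ℝ)) :
    Set ((Fin p → ℝ) → (Fin q → ℝ)) :=
  {Φ | Φ ∈ FΦ ∧ ∀ u ∈ Fw, ∀ e ∈ Etr, ∀ e' ∈ Etr,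
    covT P Φ u e = covT P Φ u e' ∧ sqT P Φ u e = sqT P Φ u e'}

/-- Diversity condition on the training environments. -/
def Diversity {p q : ℕ} {E : Type} (P : E → Measure ((Fin p → ℝ) × ℝ)) (Etr : Finset E)
    (FΦ : Set ((Fin p → ℝ) → (Fin q → ℝ))) (Fw : Set ((Fin q → ℝ) → ℝ)) : Prop :=
  ∀ Φ ∈ FΦ, Φ ∉ InvSet P FΦ Fw → ∃ u ∈ Fw, ∃ e ∈ Etr, ∃ e' ∈ Etr,
    covT P Φ u e ≠ covT P Φ u e' ∨ sqT P Φ u e ≠ sqT P Φ u e'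

/-- Regularity: measurability and finiteness of all relevant expectations. -/
def Regular {p q : ℕ} {E : Type} (P : E → Measure ((Fin p → ℝ) × ℝ))
    (FΦ : Set ((Fin p → ℝ) → (Fin q → ℝ))) (Fw : Set ((Fin q → ℝ) → ℝ)) : Prop :=
  (∀ Φ ∈ FΦ, Measurable Φ) ∧ (∀ w ∈ Fw, Measurable w) ∧
  (∀ e : E, MemLp (fun z : (Fin p → ℝ) × ℝ => z.2) 2 (P e)) ∧
  (∀ (e : E) (j : Fin p), MemLp (fun z : (Fin p → ℝ) × ℝ => z.1 j) 2 (P e)) ∧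
  (∀ Φ ∈ FΦ, ∀ u ∈ Fw, ∀ e : E,
    Integrable (fun z : (Fin p → ℝ) × ℝ => u (Φ z.1) * z.2) (P e) ∧
    Integrable (fun z : (Fin p → ℝ) × ℝ => (u (Φ z.1)) ^ 2) (P e) ∧
    Integrable (fun z : (Fin p → ℝ) × ℝ => (z.2 - u (Φ z.1)) ^ 2) (P e))

/-- A FAIRM solution: minimizer of the weighted training risk over `F_w × I_tr`. -/
def IsFairmSol {p q : ℕ} {E : Type} (P : E → Measure ((Fin p → ℝ) × ℝ)) (Etr : Finset E)
    (FΦ : Set ((Fin p → ℝ) → (Fin q → ℝ))) (Fw : Set ((Fin q → ℝ) → ℝ)) (α : E → ℝ)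
    (w : (Fin q → ℝ) → ℝ) (Φ : (Fin p → ℝ) → (Fin q → ℝ)) : Prop :=
  w ∈ Fw ∧ Φ ∈ TrFeas P Etr FΦ Fw ∧
  ∀ w' ∈ Fw, ∀ Φ' ∈ TrFeas P Etr FΦ Fw,
    ∑ e ∈ Etr, α e * risk P (fun x => w (Φ x)) e ≤
      ∑ e ∈ Etr, α e * risk P (fun x => w' (Φ' x)) e

/-- A full-information FAIRM solution: minimizer of the weighted risk over `F_w × I*`. -/
def IsFullSol {p q : ℕ} {E : Type} [Fintype E] (P : E → Measure ((Fin p → ℝ) × ℝ))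
    (FΦ : Set ((Fin p → ℝ) → (Fin q → ℝ))) (Fw : Set ((Fin q → ℝ) → ℝ)) (αs : E → ℝ)
    (w : (Fin q → ℝ) → ℝ) (Φ : (Fin p → ℝ) → (Fin q → ℝ)) : Prop :=
  w ∈ Fw ∧ Φ ∈ InvSet P FΦ Fw ∧
  ∀ w' ∈ Fw, ∀ Φ' ∈ InvSet P FΦ Fw,
    ∑ e : E, αs e * risk P (fun x => w (Φ x)) e ≤
      ∑ e : E, αs e * risk P (fun x => w' (Φ' x)) e

/-- The σ-algebra generated by a random variable `Z` on `(Fin p → ℝ) × ℝ`. -/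
def sigmaGen {p : ℕ} {β : Type*} [MeasurableSpace β] (Z : (Fin p → ℝ) × ℝ → β) :
    MeasurableSpace ((Fin p → ℝ) × ℝ) :=
  MeasurableSpace.comap Z inferInstance

/-- Conditional-mean realizability: every invariant representation admits a
conditional-mean function in `F_w`, uniformly over environments. -/
def CMR {p q : ℕ} {E : Type} (P : E → Measure ((Fin p → ℝ) × ℝ))
    (FΦ : Set ((Fin p → ℝ) → (Fin q → ℝ))) (Fw : Set ((Fin q → ℝ) → ℝ)) : Prop :=
  ∀ Φ ∈ InvSet P FΦ Fw, ∃ w ∈ Fw, ∀ e : E,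
    (P e)[(fun z : (Fin p → ℝ) × ℝ => z.2) | sigmaGen (fun z => Φ z.1)]
      =ᵐ[P e] fun z => w (Φ z.1)

/-- The σ-algebra generated by the features `x`. -/
def mX {p : ℕ} : MeasurableSpace ((Fin p → ℝ) × ℝ) := sigmaGen (fun z => z.1)

/-- A member of the class `Ξ(ρ, σ²)`: a family of environment distributions together with
a designated full-information FAIRM solution, such that `I* ≠ ∅`, the diversity condition
holds, the conditional variance is bounded by `σ²`, and the approximation bias of the
full-information FAIRM solution is bounded by `ρ`. -/
structure Fam (p q : ℕ) (E : Type) [Fintype E] (Etr : Finset E)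
    (FΦ : Set ((Fin p → ℝ) → (Fin q → ℝ))) (Fw : Set ((Fin q → ℝ) → ℝ))
    (αs : E → ℝ) (ρ σ2 : ℝ) where
  P : E → Measure ((Fin p → ℝ) × ℝ)
  prob : ∀ e, IsProbabilityMeasure (P e)
  reg : Regular P FΦ Fw
  wstar : (Fin q → ℝ) → ℝ
  Φstar : (Fin p → ℝ) → (Fin q → ℝ)
  sol : IsFullSol P FΦ Fw αs wstar Φstar
  inv_nonempty : (InvSet P FΦ Fw).Nonempty
  diverse : Diversity P Etr FΦ Fw
  noise : ∀ e : E, ∀ᵐ z ∂(P e),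
    ((P e)[(fun z' : (Fin p → ℝ) × ℝ =>
        (z'.2 - ((P e)[(fun z'' : (Fin p → ℝ) × ℝ => z''.2) | mX]) z') ^ 2) | mX]) z ≤ σ2
  bias : ∀ e : E,
    ∫ z, (((P e)[(fun z' : (Fin p → ℝ) × ℝ => z'.2) | mX]) z - wstar (Φstar z.1)) ^ 2
      ∂(P e) ≤ ρ

/-- An ERM solution: minimizer of the weighted training risk over `F_w × F_Φ`. -/
def IsERMSol {p q : ℕ} {E : Type} (P : E → Measure ((Fin p → ℝ) × ℝ)) (Etr : Finset E)
    (FΦ : Set ((Fin p → ℝ) → (Fin q → ℝ))) (Fw : Set ((Fin q → ℝ) → ℝ)) (α : E → ℝ)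
    (w : (Fin q → ℝ) → ℝ) (Φ : (Fin p → ℝ) → (Fin q → ℝ)) : Prop :=
  w ∈ Fw ∧ Φ ∈ FΦ ∧
  ∀ w' ∈ Fw, ∀ Φ' ∈ FΦ,
    ∑ e ∈ Etr, α e * risk P (fun x => w (Φ x)) e ≤
      ∑ e ∈ Etr, α e * risk P (fun x => w' (Φ' x)) e

/-- A Maximin solution: minimizer of the worst training-environment risk over `F_w × F_Φ`. -/
def IsMMSol {p q : ℕ} {E : Type} (P : E → Measure ((Fin p → ℝ) × ℝ)) (Etr : Finset E)
    (hEtr : Etr.Nonempty)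
    (FΦ : Set ((Fin p → ℝ) → (Fin q → ℝ))) (Fw : Set ((Fin q → ℝ) → ℝ))
    (w : (Fin q → ℝ) → ℝ) (Φ : (Fin p → ℝ) → (Fin q → ℝ)) : Prop :=
  w ∈ Fw ∧ Φ ∈ FΦ ∧
  ∀ w' ∈ Fw, ∀ Φ' ∈ FΦ,
    Etr.sup' hEtr (fun e => risk P (fun x => w (Φ x)) e) ≤
      Etr.sup' hEtr (fun e => risk P (fun x => w' (Φ' x)) e)

/-- A CMI solution: minimizer of the weighted training risk over pairs `(w, Φ)` such that
`w∘Φ` is the conditional mean of `y` given `Φ(x)` in every environment. -/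
def IsCMISol {p q : ℕ} {E : Type} [Fintype E] (P : E → Measure ((Fin p → ℝ) × ℝ))
    (Etr : Finset E)
    (FΦ : Set ((Fin p → ℝ) → (Fin q → ℝ))) (Fw : Set ((Fin q → ℝ) → ℝ)) (α : E → ℝ)
    (w : (Fin q → ℝ) → ℝ) (Φ : (Fin p → ℝ) → (Fin q → ℝ)) : Prop :=
  w ∈ Fw ∧ Φ ∈ FΦ ∧
  (∀ e : E, (P e)[(fun z : (Fin p → ℝ) × ℝ => z.2) | sigmaGen (fun z => Φ z.1)]
      =ᵐ[P e] fun z => w (Φ z.1)) ∧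
  ∀ w' ∈ Fw, ∀ Φ' ∈ FΦ,
    (∀ e : E, (P e)[(fun z : (Fin p → ℝ) × ℝ => z.2) | sigmaGen (fun z => Φ' z.1)]
        =ᵐ[P e] fun z => w' (Φ' z.1)) →
    ∑ e ∈ Etr, α e * risk P (fun x => w (Φ x)) e ≤
      ∑ e ∈ Etr, α e * risk P (fun x => w' (Φ' x)) e

namespace MeasureTheory

section ConditionalMean

variable {Ω : Type*} {m mΩ : MeasurableSpace Ω} {μ : Measure Ω} {y f g : Ω → ℝ}

theorem integral_mul_eq_integral_mul_of_condExp_ae_eq (hm : m ≤ mΩ) [SigmaFinite (μ.trim hm)]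
    (hf : StronglyMeasurable[m] f) (hfy : Integrable (f * y) μ) (hy : Integrable y μ)
    (hyg : μ[y | m] =ᵐ[μ] g) :
    ∫ x, f x * y x ∂μ = ∫ x, f x * g x ∂μ := calc
  ∫ x, f x * y x ∂μ = ∫ x, μ[f * y | m] x ∂μ := (integral_condExp hm).symm
  _ = ∫ x, f x * g x ∂μ := integral_congr_ae <|
      (condExp_mul_of_stronglyMeasurable_left hf hfy hy).trans
        (hyg.mono fun x hx => by simp only [Pi.mul_apply, hx])

theorem integral_sq_sub_sub_integral_sq_sub (hy : MemLp y 2 μ) (hf : MemLp f 2 μ)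
    (hg : MemLp g 2 μ) :
    ∫ x, (y x - f x) ^ 2 ∂μ - ∫ x, (y x - g x) ^ 2 ∂μ =
      (∫ x, f x ^ 2 ∂μ - 2 * ∫ x, f x * y x ∂μ) -
        (∫ x, g x ^ 2 ∂μ - 2 * ∫ x, g x * y x ∂μ) := by
  have hyf_sq : Integrable (fun x => (y x - f x) ^ 2) μ := (hy.sub hf).integrable_sq
  have hyg_sq : Integrable (fun x => (y x - g x) ^ 2) μ := (hy.sub hg).integrable_sq
  have hfy : Integrable (fun x => 2 * (f x * y x)) μ := (hf.integrable_mul hy).const_mul 2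
  have hgy : Integrable (fun x => 2 * (g x * y x)) μ := (hg.integrable_mul hy).const_mul 2
  calc ∫ x, (y x - f x) ^ 2 ∂μ - ∫ x, (y x - g x) ^ 2 ∂μ
      = ∫ x, ((f x ^ 2 - 2 * (f x * y x)) - (g x ^ 2 - 2 * (g x * y x))) ∂μ := by
        rw [← integral_sub hyf_sq hyg_sq]
        congr 1 with x
        ring
    _ = ∫ x, (f x ^ 2 - 2 * (f x * y x)) ∂μ - ∫ x, (g x ^ 2 - 2 * (g x * y x)) ∂μ :=
        integral_sub (hf.integrable_sq.sub hfy) (hg.integrable_sq.sub hgy)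
    _ = _ := by
        rw [integral_sub hf.integrable_sq hfy, integral_sub hg.integrable_sq hgy,
          integral_const_mul, integral_const_mul]

theorem integral_sq_sub_sub_integral_sq_sub_of_condExp_ae_eq [IsFiniteMeasure μ] (hm : m ≤ mΩ)
    (hy : MemLp y 2 μ) (hf : MemLp f 2 μ) (hg : MemLp g 2 μ)
    (hfm : StronglyMeasurable[m] f) (hgm : StronglyMeasurable[m] g) (hyg : μ[y | m] =ᵐ[μ] g) :
    ∫ x, (y x - f x) ^ 2 ∂μ - ∫ x, (y x - g x) ^ 2 ∂μ = ∫ x, (f x - g x) ^ 2 ∂μ := by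
  have hyf_sq : Integrable (fun x => (y x - f x) ^ 2) μ := (hy.sub hf).integrable_sq
  have hyg_sq : Integrable (fun x => (y x - g x) ^ 2) μ := (hy.sub hg).integrable_sq
  have hfg_sq : Integrable (fun x => (f x - g x) ^ 2) μ := (hf.sub hg).integrable_sq
  have hfgy : Integrable (fun x => (f x - g x) * y x) μ := (hf.sub hg).integrable_mul hy
  have hfgg : Integrable (fun x => (f x - g x) * g x) μ := (hf.sub hg).integrable_mul hg
  have horth : ∫ x, (f x - g x) * y x ∂μ = ∫ x, (f x - g x) * g x ∂μ :=
    integral_mul_eq_integral_mul_of_condExp_ae_eq hm (hfm.sub hgm) hfgy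
      (hy.integrable one_le_two) hyg
  calc ∫ x, (y x - f x) ^ 2 ∂μ - ∫ x, (y x - g x) ^ 2 ∂μ
      = ∫ x, ((f x - g x) ^ 2 + 2 * ((f x - g x) * g x - (f x - g x) * y x)) ∂μ := by
        rw [← integral_sub hyf_sq hyg_sq]
        congr 1 with x
        ring
    _ = ∫ x, (f x - g x) ^ 2 ∂μ +
          2 * (∫ x, (f x - g x) * g x ∂μ - ∫ x, (f x - g x) * y x ∂μ) := by
        rw [← integral_sub hfgg hfgy, ← integral_const_mul]
        exact integral_add hfg_sq ((hfgg.sub hfgy).const_mul 2)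
    _ = ∫ x, (f x - g x) ^ 2 ∂μ := by rw [horth, sub_self, mul_zero, add_zero]

theorem ae_eq_of_integral_sq_sub_nonpos (hfg : Integrable (fun x => (f x - g x) ^ 2) μ)
    (h : ∫ x, (f x - g x) ^ 2 ∂μ ≤ 0) : f =ᵐ[μ] g := by
  have hzero := (integral_eq_zero_iff_of_nonneg (fun x => sq_nonneg (f x - g x)) hfg).mp
    (h.antisymm (integral_nonneg fun x => sq_nonneg _))
  filter_upwards [hzero] with x hx
  exact sub_eq_zero.mp (pow_eq_zero_iff two_ne_zero |>.mp hx)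

theorem condExp_comap_comp_ae_eq {β : Type*} [mβ : MeasurableSpace β] [IsFiniteMeasure μ]
    {Z : Ω → β} {w : β → ℝ} (hZ : Measurable Z) (hw : Measurable w)
    (h : μ[y | mβ.comap Z] =ᵐ[μ] fun x => w (Z x)) :
    μ[y | MeasurableSpace.comap (fun x => w (Z x)) inferInstance] =ᵐ[μ] fun x => w (Z x) := by
  have hm₁ : mβ.comap Z ≤ mΩ := hZ.comap_le
  have hm₂₁ : MeasurableSpace.comap (fun x => w (Z x)) inferInstance ≤ mβ.comap Z := by
    change MeasurableSpace.comap (w ∘ Z) _ ≤ _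
    rw [← MeasurableSpace.comap_comp]
    exact MeasurableSpace.comap_mono hw.comap_le
  calc μ[y | MeasurableSpace.comap (fun x => w (Z x)) inferInstance]
      =ᵐ[μ] μ[μ[y | mβ.comap Z] | MeasurableSpace.comap (fun x => w (Z x)) inferInstance] :=
        (condExp_condExp_of_le hm₂₁ hm₁).symm
    _ =ᵐ[μ] μ[fun x => w (Z x) | MeasurableSpace.comap (fun x => w (Z x)) inferInstance] :=
        condExp_congr_ae h
    _ = fun x => w (Z x) := condExp_of_stronglyMeasurable (hm₂₁.trans hm₁)
        (comap_measurable _).stronglyMeasurable (integrable_condExp.congr h)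

end ConditionalMean

end MeasureTheory

section Environments

variable {p q : ℕ} {E : Type} {P : E → Measure ((Fin p → ℝ) × ℝ)} {Etr : Finset E}
  {FΦ : Set ((Fin p → ℝ) → (Fin q → ℝ))} {Fw : Set ((Fin q → ℝ) → ℝ)} {α : E → ℝ}
  {Φ : (Fin p → ℝ) → (Fin q → ℝ)} {u v w : (Fin q → ℝ) → ℝ}

theorem Diversity.mem_invSet_of_mem_trFeas (hdiv : Diversity P Etr FΦ Fw)
    (hΦ : Φ ∈ TrFeas P Etr FΦ Fw) : Φ ∈ InvSet P FΦ Fw := by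
  by_contra hnot
  obtain ⟨u, hu, e, he, e', he', hne⟩ := hdiv Φ hΦ.1 hnot
  exact hne.elim (· (hΦ.2 u hu e he e' he').1) (· (hΦ.2 u hu e he e' he').2)

theorem Regular.measurable_comp_fst (hreg : Regular P FΦ Fw) (hΦ : Φ ∈ FΦ) :
    Measurable fun z : (Fin p → ℝ) × ℝ => Φ z.1 :=
  (hreg.1 Φ hΦ).comp measurable_fst

theorem Regular.memLp_comp (hreg : Regular P FΦ Fw) (hΦ : Φ ∈ FΦ) (hu : u ∈ Fw) (e : E) :
    MemLp (fun z : (Fin p → ℝ) × ℝ => u (Φ z.1)) 2 (P e) :=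
  (memLp_two_iff_integrable_sq
    ((hreg.2.1 u hu).comp (hreg.measurable_comp_fst hΦ)).aestronglyMeasurable).mpr
    (hreg.2.2.2.2 Φ hΦ u hu e).2.1

theorem risk_sub_risk_eq_of_mem_invSet (hreg : Regular P FΦ Fw) (hΦ : Φ ∈ InvSet P FΦ Fw)
    (hu : u ∈ Fw) (hv : v ∈ Fw) (e e' : E) :
    risk P (fun x => u (Φ x)) e - risk P (fun x => v (Φ x)) e =
      risk P (fun x => u (Φ x)) e' - risk P (fun x => v (Φ x)) e' := by
  have hexpand : ∀ e, risk P (fun x => u (Φ x)) e - risk P (fun x => v (Φ x)) e =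
      (sqT P Φ u e - 2 * covT P Φ u e) - (sqT P Φ v e - 2 * covT P Φ v e) := fun e =>
    integral_sq_sub_sub_integral_sq_sub (hreg.2.2.1 e) (hreg.memLp_comp hΦ.1 hu e)
      (hreg.memLp_comp hΦ.1 hv e)
  rw [hexpand, hexpand, (hΦ.2 u hu e e').1, (hΦ.2 u hu e e').2, (hΦ.2 v hv e e').1,
    (hΦ.2 v hv e e').2]

theorem risk_sub_risk_eq_integral_sq_sub (hreg : Regular P FΦ Fw) (e : E)
    [IsFiniteMeasure (P e)] (hΦ : Φ ∈ FΦ) (hu : u ∈ Fw) (hv : v ∈ Fw)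
    (hcond : (P e)[fun z => z.2 | sigmaGen fun z => Φ z.1] =ᵐ[P e] fun z => v (Φ z.1)) :
    risk P (fun x => u (Φ x)) e - risk P (fun x => v (Φ x)) e =
      ∫ z, (u (Φ z.1) - v (Φ z.1)) ^ 2 ∂(P e) :=
  integral_sq_sub_sub_integral_sq_sub_of_condExp_ae_eq (hreg.measurable_comp_fst hΦ).comap_le
    (hreg.2.2.1 e) (hreg.memLp_comp hΦ hu e) (hreg.memLp_comp hΦ hv e)
    ((hreg.2.1 u hu).comp (comap_measurable _)).stronglyMeasurable
    ((hreg.2.1 v hv).comp (comap_measurable _)).stronglyMeasurable hcond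

theorem IsFairmSol.condExp_ae_eq [∀ e, IsFiniteMeasure (P e)] (hreg : Regular P FΦ Fw)
    (hdiv : Diversity P Etr FΦ Fw) (hcmr : CMR P FΦ Fw) (hα : ∑ e ∈ Etr, α e = 1)
    (hsol : IsFairmSol P Etr FΦ Fw α w Φ) (e : E) :
    (P e)[fun z => z.2 | sigmaGen fun z => w (Φ z.1)] =ᵐ[P e] fun z => w (Φ z.1) := by
  obtain ⟨hw, hΦtr, hmin⟩ := hsol
  have hΦ := hdiv.mem_invSet_of_mem_trFeas hΦtr
  obtain ⟨v, hv, hcond⟩ := hcmr Φ hΦ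
  have hexcess : risk P (fun x => w (Φ x)) e - risk P (fun x => v (Φ x)) e ≤ 0 := calc
    _ = ∑ e' ∈ Etr, α e' * (risk P (fun x => w (Φ x)) e' - risk P (fun x => v (Φ x)) e') := by
        simp_rw [risk_sub_risk_eq_of_mem_invSet hreg hΦ hw hv _ e, ← Finset.sum_mul, hα,
          one_mul]
    _ ≤ 0 := by
        simpa only [mul_sub, Finset.sum_sub_distrib, sub_nonpos] using hmin v hv Φ hΦtr
  have hwv : (fun z : (Fin p → ℝ) × ℝ => w (Φ z.1)) =ᵐ[P e] fun z => v (Φ z.1) :=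
    ae_eq_of_integral_sq_sub_nonpos
      ((hreg.memLp_comp hΦ.1 hw e).sub (hreg.memLp_comp hΦ.1 hv e)).integrable_sq
      ((risk_sub_risk_eq_integral_sq_sub hreg e hΦ.1 hw hv (hcond e)).symm.trans_le hexcess)
  exact condExp_comap_comp_ae_eq (hreg.measurable_comp_fst hΦ.1) (hreg.2.1 w hw)
    ((hcond e).trans hwv.symm)

theorem IsCMISol.condExp_ae_eq [Fintype E] [∀ e, IsFiniteMeasure (P e)]
    (hreg : Regular P FΦ Fw) (hsol : IsCMISol P Etr FΦ Fw α w Φ) (e : E) :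
    (P e)[fun z => z.2 | sigmaGen fun z => w (Φ z.1)] =ᵐ[P e] fun z => w (Φ z.1) :=
  condExp_comap_comp_ae_eq (hreg.measurable_comp_fst hsol.2.1) (hreg.2.1 w hsol.1) (hsol.2.2.1 e)

end Environments

theorem stmt9_general {p : ℕ} {E : Type} [Fintype E] (Etr : Finset E)
    (FΦ : Set ((Fin p → ℝ) → (Fin p → ℝ))) (Fw : Set ((Fin p → ℝ) → ℝ))
    (αs : E → ℝ) (α : E → ℝ) (hαsum : ∑ e ∈ Etr, α e = 1) (ρ σ2 : ℝ)
    (F : Fam p p E Etr FΦ Fw αs ρ σ2) (hcmr : CMR F.P FΦ Fw) :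
    (∀ wF ΦF, IsFairmSol F.P Etr FΦ Fw α wF ΦF →
      ∀ e : E,
        (F.P e)[(fun z : (Fin p → ℝ) × ℝ => z.2) |
            sigmaGen (fun z => wF (ΦF z.1))]
          =ᵐ[F.P e] fun z => wF (ΦF z.1)) ∧
    (∀ wC ΦC, IsCMISol F.P Etr FΦ Fw α wC ΦC →
      ∀ e : E,
        (F.P e)[(fun z : (Fin p → ℝ) × ℝ => z.2) |
            sigmaGen (fun z => wC (ΦC z.1))]
          =ᵐ[F.P e] fun z => wC (ΦC z.1)) := by
  have := F.prob
  exact ⟨fun _ _ hsol => hsol.condExp_ae_eq F.reg F.diverse hcmr hαsum,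
    fun _ _ hsol => hsol.condExp_ae_eq F.reg⟩

/-- under conditional-mean realizability, every FAIRM solution and every CMI
solution of a family in `Ξ(ρ,σ²)` has zero multi-calibration bias in every environment. -/
theorem stmt9 {p : ℕ} {E : Type} [Fintype E] [Nonempty E]
    (Etr : Finset E) (hEtr : Etr.Nonempty)
    (FΦ : Set ((Fin p → ℝ) → (Fin p → ℝ))) (Fw : Set ((Fin p → ℝ) → ℝ))
    (hsel : ∀ S : Finset (Fin p), (fun x j => if j ∈ S then x j else 0) ∈ FΦ)
    (hlin : ∀ b : Fin p → ℝ, (fun φ : Fin p → ℝ => ∑ j, b j * φ j) ∈ Fw)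
    (αs : E → ℝ) (hαs : ∀ e, 0 < αs e) (hαssum : ∑ e : E, αs e = 1)
    (α : E → ℝ) (hα : ∀ e ∈ Etr, 0 < α e) (hαsum : ∑ e ∈ Etr, α e = 1)
    (ρ σ2 : ℝ) (hρ : 0 < ρ) (hσ2 : 0 < σ2)
    (F : Fam p p E Etr FΦ Fw αs ρ σ2) (hcmr : CMR F.P FΦ Fw) :
    (∀ wF ΦF, IsFairmSol F.P Etr FΦ Fw α wF ΦF →
      ∀ e : E,
        (F.P e)[(fun z : (Fin p → ℝ) × ℝ => z.2) |
            sigmaGen (fun z => wF (ΦF z.1))]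
          =ᵐ[F.P e] fun z => wF (ΦF z.1)) ∧
    (∀ wC ΦC, IsCMISol F.P Etr FΦ Fw α wC ΦC →
      ∀ e : E,
        (F.P e)[(fun z : (Fin p → ℝ) × ℝ => z.2) |
            sigmaGen (fun z => wC (ΦC z.1))]
          =ᵐ[F.P e] fun z => wC (ΦC z.1)) :=
  stmt9_general Etr FΦ Fw αs α hαsum ρ σ2 F hcmr
end
end

section
/- Assume the uniform-deviation hypothesis, the empirical diversity condition, and I* ≠ ∅. Then for every empirical FAIRM solution (ŵ, Φ̂) and every full-information FAIRM solution (w*, Φ*): max_{e∈E} (R^e(ŵ∘Φ̂) − R^e(w*∘Φ*)) ≤ 4ρ_1 + 2ρ_2. -/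
open MeasureTheory

noncomputable section

/-- Empirical covariance-type moment `n_e⁻¹ Σ_i u(Φ(x_i^e))·y_i^e`. -/
def empCov {p q : ℕ} {E : Type} (n : E → ℕ)
    (X : (e : E) → Fin (n e) → (Fin p → ℝ)) (Y : (e : E) → Fin (n e) → ℝ)
    (Φ : (Fin p → ℝ) → (Fin q → ℝ)) (u : (Fin q → ℝ) → ℝ) (e : E) : ℝ :=
  (∑ i, u (Φ (X e i)) * Y e i) / (n e : ℝ)

/-- Empirical second moment `n_e⁻¹ Σ_i u(Φ(x_i^e))²`. -/
def empSq {p q : ℕ} {E : Type} (n : E → ℕ)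
    (X : (e : E) → Fin (n e) → (Fin p → ℝ))
    (Φ : (Fin p → ℝ) → (Fin q → ℝ)) (u : (Fin q → ℝ) → ℝ) (e : E) : ℝ :=
  (∑ i, (u (Φ (X e i))) ^ 2) / (n e : ℝ)

/-- Uniform-deviation hypothesis with levels `ρ₁/2` and `ρ₂/2`. -/
def UnifDev {p q : ℕ} {E : Type} (P : E → Measure ((Fin p → ℝ) × ℝ)) (Etr : Finset E)
    (FΦ : Set ((Fin p → ℝ) → (Fin q → ℝ))) (Fw : Set ((Fin q → ℝ) → ℝ))
    (n : E → ℕ) (X : (e : E) → Fin (n e) → (Fin p → ℝ)) (Y : (e : E) → Fin (n e) → ℝ)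
    (ρ1 ρ2 : ℝ) : Prop :=
  ∀ u ∈ Fw, ∀ Φ ∈ FΦ, ∀ e ∈ Etr,
    |empCov n X Y Φ u e - covT P Φ u e| ≤ ρ1 / 2 ∧
    |empSq n X Φ u e - sqT P Φ u e| ≤ ρ2 / 2

/-- Empirical diversity condition. -/
def EmpDiv {p q : ℕ} {E : Type} (P : E → Measure ((Fin p → ℝ) × ℝ)) (Etr : Finset E)
    (FΦ : Set ((Fin p → ℝ) → (Fin q → ℝ))) (Fw : Set ((Fin q → ℝ) → ℝ))
    (ρ1 ρ2 : ℝ) : Prop :=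
  ∀ Φ ∈ FΦ, Φ ∉ InvSet P FΦ Fw → ∃ u ∈ Fw, ∃ e ∈ Etr, ∃ e' ∈ Etr,
    2 * ρ1 < |covT P Φ u e - covT P Φ u e'| ∨ 2 * ρ2 < |sqT P Φ u e - sqT P Φ u e'|

/-- The empirically feasible set. -/
def EmpFeas {p q : ℕ} {E : Type} (Etr : Finset E)
    (FΦ : Set ((Fin p → ℝ) → (Fin q → ℝ))) (Fw : Set ((Fin q → ℝ) → ℝ))
    (n : E → ℕ) (X : (e : E) → Fin (n e) → (Fin p → ℝ)) (Y : (e : E) → Fin (n e) → ℝ)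
    (ρ1 ρ2 : ℝ) : Set ((Fin p → ℝ) → (Fin q → ℝ)) :=
  {Φ | Φ ∈ FΦ ∧ ∀ u ∈ Fw, ∀ e ∈ Etr, ∀ e' ∈ Etr,
    |empCov n X Y Φ u e - empCov n X Y Φ u e'| ≤ ρ1 ∧
    |empSq n X Φ u e - empSq n X Φ u e'| ≤ ρ2}

/-- An empirical FAIRM solution: minimizer of the empirical squared loss over
`F_w ×` (the empirically feasible set). -/
def IsEmpFairmSol {p q : ℕ} {E : Type} (Etr : Finset E)
    (FΦ : Set ((Fin p → ℝ) → (Fin q → ℝ))) (Fw : Set ((Fin q → ℝ) → ℝ))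
    (n : E → ℕ) (X : (e : E) → Fin (n e) → (Fin p → ℝ)) (Y : (e : E) → Fin (n e) → ℝ)
    (ρ1 ρ2 : ℝ)
    (w : (Fin q → ℝ) → ℝ) (Φ : (Fin p → ℝ) → (Fin q → ℝ)) : Prop :=
  w ∈ Fw ∧ Φ ∈ EmpFeas Etr FΦ Fw n X Y ρ1 ρ2 ∧
  ∀ w' ∈ Fw, ∀ Φ' ∈ EmpFeas Etr FΦ Fw n X Y ρ1 ρ2,
    ∑ e ∈ Etr, ∑ i, (Y e i - w (Φ (X e i))) ^ 2 ≤
      ∑ e ∈ Etr, ∑ i, (Y e i - w' (Φ' (X e i))) ^ 2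

/-! Both the risk and the empirical squared loss of `u ∘ Φ` split as a term depending on the
data alone plus the reduced risk `E[u(Φ(x))²] - 2 E[u(Φ(x)) y]`, which only involves the two
moments controlled by invariance and by the uniform-deviation hypothesis. If `Φ̂` and `Φ*` are
both invariant, the risk gap `R^e(ŵ ∘ Φ̂) - R^e(w* ∘ Φ*)` is therefore the same in every
environment. Empirical diversity forces the empirically feasible `Φ̂` to be invariant, and
uniform deviation makes the invariant `Φ*` empirically feasible; optimality of `(ŵ, Φ̂)` then
gives a training environment where the empirical reduced risk of `ŵ ∘ Φ̂` is at most that of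
`w* ∘ Φ*`, and each of the two empirical reduced risks is within `ρ₁ + ρ₂/2` of its population
value. This even gives the bound `2ρ₁ + ρ₂`. -/

def reducedRisk {p q : ℕ} {E : Type} (P : E → Measure ((Fin p → ℝ) × ℝ))
    (Φ : (Fin p → ℝ) → (Fin q → ℝ)) (u : (Fin q → ℝ) → ℝ) (e : E) : ℝ :=
  sqT P Φ u e - 2 * covT P Φ u e

def empReducedRisk {p q : ℕ} {E : Type} (n : E → ℕ)
    (X : (e : E) → Fin (n e) → (Fin p → ℝ)) (Y : (e : E) → Fin (n e) → ℝ)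
    (Φ : (Fin p → ℝ) → (Fin q → ℝ)) (u : (Fin q → ℝ) → ℝ) (e : E) : ℝ :=
  empSq n X Φ u e - 2 * empCov n X Y Φ u e

theorem integral_sub_sq_eq {α : Type*} [MeasurableSpace α] {μ : Measure α} {f g : α → ℝ}
    (hfg : Integrable (fun a => f a * g a) μ) (hf : Integrable (fun a => f a ^ 2) μ)
    (hgf : Integrable (fun a => (g a - f a) ^ 2) μ) :
    ∫ a, (g a - f a) ^ 2 ∂μ = ∫ a, g a ^ 2 ∂μ + (∫ a, f a ^ 2 ∂μ - 2 * ∫ a, f a * g a ∂μ) := by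
  have hg : (fun a => g a ^ 2) = fun a => ((g a - f a) ^ 2 + 2 * (f a * g a)) - f a ^ 2 := by
    funext a; ring
  have hsum : Integrable (fun a => (g a - f a) ^ 2 + 2 * (f a * g a)) μ :=
    hgf.add (hfg.const_mul 2)
  rw [hg, integral_sub hsum hf, integral_add hgf (hfg.const_mul 2), integral_const_mul]
  ring

theorem abs_sub_le_add_of_abs_sub_le_half {a a' b b' r s : ℝ} (ha : |a - b| ≤ r / 2)
    (ha' : |a' - b'| ≤ r / 2) (hs : |a - a'| ≤ s) : |b - b'| ≤ s + r := by
  rw [abs_le] at *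
  constructor <;> linarith [ha.1, ha.2, ha'.1, ha'.2, hs.1, hs.2]

section Fairm

variable {p q : ℕ} {E : Type} {P : E → Measure ((Fin p → ℝ) × ℝ)} {Etr : Finset E}
  {FΦ : Set ((Fin p → ℝ) → (Fin q → ℝ))} {Fw : Set ((Fin q → ℝ) → ℝ)}
  {n : E → ℕ} {X : (e : E) → Fin (n e) → (Fin p → ℝ)} {Y : (e : E) → Fin (n e) → ℝ}
  {ρ1 ρ2 : ℝ} {Φ : (Fin p → ℝ) → (Fin q → ℝ)} {u : (Fin q → ℝ) → ℝ}

theorem risk_comp_eq (hreg : Regular P FΦ Fw) (hΦ : Φ ∈ FΦ) (hu : u ∈ Fw) (e : E) :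
    risk P (fun x => u (Φ x)) e = ∫ z, z.2 ^ 2 ∂(P e) + reducedRisk P Φ u e := by
  obtain ⟨hcov, hsq, hrisk⟩ := hreg.2.2.2.2 Φ hΦ u hu e
  exact integral_sub_sq_eq hcov hsq hrisk

theorem sum_sq_sub_comp_eq {e : E} (hn : n e ≠ 0) :
    ∑ i, (Y e i - u (Φ (X e i))) ^ 2 = ∑ i, Y e i ^ 2 + n e * empReducedRisk n X Y Φ u e := by
  have hsplit : ∀ i, (Y e i - u (Φ (X e i))) ^ 2
      = Y e i ^ 2 + (u (Φ (X e i)) ^ 2 - 2 * (u (Φ (X e i)) * Y e i)) := fun i => by ring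
  simp only [hsplit, Finset.sum_add_distrib, Finset.sum_sub_distrib, ← Finset.mul_sum,
    empReducedRisk, empSq, empCov]
  field_simp

theorem abs_empReducedRisk_sub_reducedRisk_le (hdev : UnifDev P Etr FΦ Fw n X Y ρ1 ρ2)
    (hu : u ∈ Fw) (hΦ : Φ ∈ FΦ) {e : E} (he : e ∈ Etr) :
    |empReducedRisk n X Y Φ u e - reducedRisk P Φ u e| ≤ ρ1 + ρ2 / 2 := by
  obtain ⟨hcov, hsq⟩ := hdev u hu Φ hΦ e he
  rw [abs_le] at hcov hsq ⊢
  unfold empReducedRisk reducedRisk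
  constructor <;> linarith [hcov.1, hcov.2, hsq.1, hsq.2]

theorem reducedRisk_eq_of_mem_invSet (hΦ : Φ ∈ InvSet P FΦ Fw) (hu : u ∈ Fw) (e e' : E) :
    reducedRisk P Φ u e = reducedRisk P Φ u e' := by
  obtain ⟨hcov, hsq⟩ := hΦ.2 u hu e e'
  rw [reducedRisk, reducedRisk, hcov, hsq]

/-- Training moments of an empirically feasible `Φ` differ by at most `2ρ₁`, resp. `2ρ₂`,
which empirical diversity rules out for non-invariant `Φ`. -/
theorem mem_invSet_of_mem_empFeas (hdev : UnifDev P Etr FΦ Fw n X Y ρ1 ρ2)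
    (hdiv : EmpDiv P Etr FΦ Fw ρ1 ρ2) (hΦ : Φ ∈ EmpFeas Etr FΦ Fw n X Y ρ1 ρ2) :
    Φ ∈ InvSet P FΦ Fw := by
  by_contra hnot
  obtain ⟨u, hu, e, he, e', he', hgap⟩ := hdiv Φ hΦ.1 hnot
  obtain ⟨hcov, hsq⟩ := hdev u hu Φ hΦ.1 e he
  obtain ⟨hcov', hsq'⟩ := hdev u hu Φ hΦ.1 e' he'
  obtain ⟨hcovF, hsqF⟩ := hΦ.2 u hu e he e' he'
  rcases hgap with hgap | hgap
  · linarith [abs_sub_le_add_of_abs_sub_le_half hcov hcov' hcovF]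
  · linarith [abs_sub_le_add_of_abs_sub_le_half hsq hsq' hsqF]

theorem mem_empFeas_of_mem_invSet (hdev : UnifDev P Etr FΦ Fw n X Y ρ1 ρ2)
    (hΦ : Φ ∈ InvSet P FΦ Fw) : Φ ∈ EmpFeas Etr FΦ Fw n X Y ρ1 ρ2 := by
  refine ⟨hΦ.1, fun u hu e he e' he' => ?_⟩
  obtain ⟨hcov, hsq⟩ := hdev u hu Φ hΦ.1 e he
  obtain ⟨hcov', hsq'⟩ := hdev u hu Φ hΦ.1 e' he'
  obtain ⟨hcovI, hsqI⟩ := hΦ.2 u hu e e'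
  rw [abs_sub_comm] at hcov hcov' hsq hsq'
  constructor
  · simpa using abs_sub_le_add_of_abs_sub_le_half (s := 0) hcov hcov' (by simp [hcovI])
  · simpa using abs_sub_le_add_of_abs_sub_le_half (s := 0) hsq hsq' (by simp [hsqI])

theorem exists_empReducedRisk_le_of_isEmpFairmSol {what w : (Fin q → ℝ) → ℝ}
    {Φhat : (Fin p → ℝ) → (Fin q → ℝ)} (hhat : IsEmpFairmSol Etr FΦ Fw n X Y ρ1 ρ2 what Φhat)
    (hw : w ∈ Fw) (hΦ : Φ ∈ EmpFeas Etr FΦ Fw n X Y ρ1 ρ2) (hEtr : Etr.Nonempty)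
    (hn : ∀ e ∈ Etr, 0 < n e) :
    ∃ e ∈ Etr, empReducedRisk n X Y Φhat what e ≤ empReducedRisk n X Y Φ w e := by
  obtain ⟨e, he, hle⟩ := Finset.exists_le_of_sum_le hEtr (hhat.2.2 w hw Φ hΦ)
  have hne : n e ≠ 0 := (hn e he).ne'
  rw [sum_sq_sub_comp_eq hne, sum_sq_sub_comp_eq hne, add_le_add_iff_left] at hle
  exact ⟨e, he, le_of_mul_le_mul_left hle (by exact_mod_cast hn e he)⟩

end Fairm

theorem stmt13_general {p q : ℕ} {E : Type} [Fintype E]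
    (Etr : Finset E) (hEtr : Etr.Nonempty)
    (P : E → Measure ((Fin p → ℝ) × ℝ))
    (FΦ : Set ((Fin p → ℝ) → (Fin q → ℝ))) (Fw : Set ((Fin q → ℝ) → ℝ))
    (hreg : Regular P FΦ Fw)
    (αs : E → ℝ)
    (n : E → ℕ) (hn : ∀ e ∈ Etr, 0 < n e)
    (X : (e : E) → Fin (n e) → (Fin p → ℝ)) (Y : (e : E) → Fin (n e) → ℝ)
    (ρ1 ρ2 : ℝ) (hρ1 : 0 < ρ1) (hρ2 : 0 < ρ2)
    (hdev : UnifDev P Etr FΦ Fw n X Y ρ1 ρ2)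
    (hdiv : EmpDiv P Etr FΦ Fw ρ1 ρ2)
    (what : (Fin q → ℝ) → ℝ) (Φhat : (Fin p → ℝ) → (Fin q → ℝ))
    (hhat : IsEmpFairmSol Etr FΦ Fw n X Y ρ1 ρ2 what Φhat)
    (wstar : (Fin q → ℝ) → ℝ) (Φstar : (Fin p → ℝ) → (Fin q → ℝ))
    (hstar : IsFullSol P FΦ Fw αs wstar Φstar) :
    ∀ e : E,
      risk P (fun x => what (Φhat x)) e - risk P (fun x => wstar (Φstar x)) e ≤
        4 * ρ1 + 2 * ρ2 := by
  intro e
  obtain ⟨hwstar, hΦstar, -⟩ := hstar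
  have hwhat := hhat.1
  have hΦhat := mem_invSet_of_mem_empFeas hdev hdiv hhat.2.1
  obtain ⟨e', he', hle⟩ := exists_empReducedRisk_le_of_isEmpFairmSol hhat hwstar
    (mem_empFeas_of_mem_invSet hdev hΦstar) hEtr hn
  have hdevhat := abs_le.mp (abs_empReducedRisk_sub_reducedRisk_le hdev hwhat hΦhat.1 he')
  have hdevstar := abs_le.mp (abs_empReducedRisk_sub_reducedRisk_le hdev hwstar hΦstar.1 he')
  rw [risk_comp_eq hreg hΦhat.1 hwhat, risk_comp_eq hreg hΦstar.1 hwstar,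
    reducedRisk_eq_of_mem_invSet hΦhat hwhat e e',
    reducedRisk_eq_of_mem_invSet hΦstar hwstar e e']
  linarith [hdevhat.1, hdevstar.2]

/-- domain generalization of empirical FAIRM. Under the uniform-deviation
hypothesis, the empirical diversity condition and `I* ≠ ∅`, every empirical FAIRM
solution is within `4ρ₁ + 2ρ₂` of the full-information FAIRM risk in every environment. -/
theorem stmt13 {p q : ℕ} {E : Type} [Fintype E] [Nonempty E]
    (Etr : Finset E) (hEtr : Etr.Nonempty)
    (P : E → Measure ((Fin p → ℝ) × ℝ)) [∀ e, IsProbabilityMeasure (P e)]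
    (FΦ : Set ((Fin p → ℝ) → (Fin q → ℝ))) (Fw : Set ((Fin q → ℝ) → ℝ))
    (hreg : Regular P FΦ Fw)
    (αs : E → ℝ) (hαs : ∀ e, 0 < αs e) (hαssum : ∑ e : E, αs e = 1)
    (n : E → ℕ) (hn : ∀ e ∈ Etr, 0 < n e)
    (X : (e : E) → Fin (n e) → (Fin p → ℝ)) (Y : (e : E) → Fin (n e) → ℝ)
    (ρ1 ρ2 : ℝ) (hρ1 : 0 < ρ1) (hρ2 : 0 < ρ2)
    (hdev : UnifDev P Etr FΦ Fw n X Y ρ1 ρ2)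
    (hdiv : EmpDiv P Etr FΦ Fw ρ1 ρ2)
    (hne : (InvSet P FΦ Fw).Nonempty)
    (what : (Fin q → ℝ) → ℝ) (Φhat : (Fin p → ℝ) → (Fin q → ℝ))
    (hhat : IsEmpFairmSol Etr FΦ Fw n X Y ρ1 ρ2 what Φhat)
    (wstar : (Fin q → ℝ) → ℝ) (Φstar : (Fin p → ℝ) → (Fin q → ℝ))
    (hstar : IsFullSol P FΦ Fw αs wstar Φstar) :
    ∀ e : E,
      risk P (fun x => what (Φhat x)) e - risk P (fun x => wstar (Φstar x)) e ≤
        4 * ρ1 + 2 * ρ2 :=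
  stmt13_general Etr hEtr P FΦ Fw hreg αs n hn X Y ρ1 ρ2 hρ1 hρ2 hdev hdiv what Φhat hhat wstar
    Φstar hstar
end
end
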